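/- Let α > 0, m > 0, and let β₁, β₂ : ℝ → ℝ be continuous functions such that there is a constant c > 0 with c ≤ β₁(t) ≤ β₂(t) for all t ≥ 0, and such that β₁ is nonincreasing on [0,∞). Let (S₁, I₁, R₁) and (S₂, I₂, R₂) be solutions of the SIR system with transmission rates β₁ and β₂ respectively, with identical initial conditions S₁(0) = S₂(0) = S₀ > 0, I₁(0) = I₂(0) = I₀ > 0, R₁(0) = R₂(0) = R₀ ≥ 0 with S₀ + I₀ + R₀ = m. Then S₁(t) ≥ S₂(t) for every t ≥ 0. -/

import Mathlib

/-!
With `u = log S₁ - log S₂` and `v = R₂ - R₁` one has `α m u' = β₂ R₂' - β₁ R₁' ≥ β₁ v'`. As `β₁` is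
nonincreasing, `α m u - β₁ (v + N)` is nondecreasing as long as `v ≥ -N`; hence `u ≥ -β₁(0) N / (α m)`
and `S₁ - S₂ ≥ -K N`. Since `S + I + R` is conserved, `v' = α (S₁ - S₂ - v) ≥ -α (v + K N)`, and a
continuation argument over steps of a fixed length shows `v ≥ 0` for all times. Then `u ≥ 0`.
-/

/-- An SIR model with total population `m`, recovery rate `α`, and transmission
rate `β : ℝ → ℝ` consists of differentiable functions `S, I, R : ℝ → ℝ`
satisfying, for all `t ≥ 0`:
`I'(t) = β(t)·S(t)·I(t)/m − α·I(t)`, `S'(t) = −β(t)·S(t)·I(t)/m`, `R'(t) = α·I(t)`. -/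
def IsSIR (α m : ℝ) (β S I R : ℝ → ℝ) : Prop :=
  Differentiable ℝ S ∧ Differentiable ℝ I ∧ Differentiable ℝ R ∧
  ∀ t : ℝ, 0 ≤ t →
    deriv I t = β t * S t * I t / m - α * I t ∧
    deriv S t = -(β t * S t * I t / m) ∧
    deriv R t = α * I t

open Set Filter Topology Real

theorem sub_mul_le_sub_mul_of_le_mul_deriv {u v g u' v' : ℝ → ℝ} {a b : ℝ} (hab : a ≤ b)
    (hu : ∀ x ∈ Icc a b, HasDerivAt u (u' x) x) (hv : ∀ x ∈ Icc a b, HasDerivAt v (v' x) x)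
    (hg : ContinuousOn g (Icc a b)) (hg_anti : AntitoneOn g (Icc a b))
    (hv_nonneg : ∀ x ∈ Icc a b, 0 ≤ v x) (hle : ∀ x ∈ Icc a b, g x * v' x ≤ u' x) :
    u a - g a * v a ≤ u b - g b * v b := by
  set f : ℝ → ℝ := fun x => g x * v x - u x
  have hf : ContinuousOn f (Icc a b) :=
    (hg.mul fun x hx => (hv x hx).continuousAt.continuousWithinAt).sub
      fun x hx => (hu x hx).continuousAt.continuousWithinAt
  suffices f b ≤ f a by simp only [f] at this; linarith
  -- `g` need not be differentiable: bound the right Dini derivative of `f` instead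
  refine image_le_of_liminf_slope_right_le_deriv_boundary (B := fun _ => f a) (B' := fun _ => 0)
    hf le_rfl continuousOn_const (fun x _ => hasDerivWithinAt_const x _ (f a))
    (fun x hx r hr => ?_) ⟨hab, le_rfl⟩
  have hxI : x ∈ Icc a b := Ico_subset_Icc_self hx
  have hslope : ∀ {w w' : ℝ → ℝ}, HasDerivAt w (w' x) x →
      Tendsto (slope w x) (𝓝[>] x) (𝓝 (w' x)) := fun h =>
    (hasDerivWithinAt_iff_tendsto_slope' (lt_irrefl x)).1 h.hasDerivWithinAt
  have hlim : Tendsto (fun z => g z * slope v x z - slope u x z) (𝓝[>] x)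
      (𝓝 (g x * v' x - u' x)) :=
    (((hg x hxI).mono_of_mem_nhdsWithin (Icc_mem_nhdsGT_of_mem hx)).tendsto.mul
      (hslope (hv x hxI))).sub (hslope (hu x hxI))
  have hlt : g x * v' x - u' x < r := by linarith [hle x hxI]
  refine Eventually.frequently ?_
  filter_upwards [hlim.eventually (gt_mem_nhds hlt), Ioc_mem_nhdsGT hx.2] with z hz hzI
  have hxz : 0 < z - x := sub_pos.2 hzI.1
  have hgv : (g z - g x) * v x ≤ 0 :=
    mul_nonpos_of_nonpos_of_nonneg
      (sub_nonpos.2 (hg_anti hxI ⟨by linarith [hx.1, hzI.1], hzI.2⟩ hzI.1.le)) (hv_nonneg x hxI)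
  have : slope f x z = g z * slope v x z - slope u x z + (g z - g x) * v x / (z - x) := by
    simp only [f, slope_def_field]; field_simp; ring
  rw [this]
  linarith [div_nonpos_of_nonpos_of_nonneg hgv hxz.le]

theorem monotoneOn_exp_mul_add_of_deriv_ge {v v' : ℝ → ℝ} {α c a b : ℝ}
    (hv : ∀ s ∈ Icc a b, HasDerivAt v (v' s) s) (hv' : ∀ s ∈ Icc a b, -(α * (v s + c)) ≤ v' s) :
    MonotoneOn (fun s => exp (α * s) * (v s + c)) (Icc a b) := by
  have hderiv : ∀ s ∈ Icc a b, HasDerivAt (fun s => exp (α * s) * (v s + c))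
      (exp (α * s) * (α * (v s + c) + v' s)) s := fun s hs => by
    have hexp : HasDerivAt (fun s => exp (α * s)) (exp (α * s) * α) s := by
      simpa using ((hasDerivAt_id s).const_mul α).exp
    exact (hexp.mul ((hv s hs).add_const c)).congr_deriv (by ring)
  refine monotoneOn_of_hasDerivWithinAt_nonneg (convex_Icc a b)
    (fun s hs => (hderiv s hs).continuousAt.continuousWithinAt)
    (fun s hs => (hderiv s (interior_subset hs)).hasDerivWithinAt) fun s hs => ?_
  have := hv' s (interior_subset hs)
  exact mul_nonneg (exp_pos _).le (by linarith)

section Continuation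

variable {v v' : ℝ → ℝ} {α K : ℝ}

theorem nonneg_Icc_add_of_deriv_ge (hα : 0 < α) (hK : 0 ≤ K)
    (hv : ∀ t, 0 ≤ t → HasDerivAt v (v' t) t)
    (hv' : ∀ t N, 0 ≤ t → (∀ s ∈ Icc 0 t, -N ≤ v s) → -(α * (v t + K * N)) ≤ v' t)
    {h : ℝ} (hh : K * (exp (α * h) - 1) < 1) {t₀ : ℝ} (ht₀ : 0 ≤ t₀)
    (hpos : ∀ s ∈ Icc 0 t₀, 0 ≤ v s) : ∀ s ∈ Icc 0 (t₀ + h), 0 ≤ v s := by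
  by_contra! ⟨σ, hσ, hσneg⟩
  have hσt₀ : t₀ < σ := lt_of_not_ge fun hle => (hpos σ ⟨hσ.1, hle⟩).not_gt hσneg
  obtain ⟨τ, hτ, hτmin⟩ := isCompact_Icc.exists_isMinOn (nonempty_Icc.2 hσt₀.le)
    (fun x hx => (hv x (ht₀.trans hx.1)).continuousAt.continuousWithinAt :
      ContinuousOn v (Icc t₀ σ))
  have hmin : ∀ s ∈ Icc t₀ σ, v τ ≤ v s := isMinOn_iff.1 hτmin
  set N := -v τ
  have hN : 0 < N := by linarith [hmin σ ⟨hσt₀.le, le_rfl⟩]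
  have hbound : ∀ s ∈ Icc 0 τ, -N ≤ v s := fun s hs => by
    rcases le_or_gt s t₀ with hs' | hs'
    · linarith [hpos s ⟨hs.1, hs'⟩]
    · linarith [hmin s ⟨hs'.le, hs.2.trans hτ.2⟩]
  have hmono : exp (α * t₀) * (v t₀ + K * N) ≤ exp (α * τ) * (v τ + K * N) :=
    monotoneOn_exp_mul_add_of_deriv_ge (fun s hs => hv s (ht₀.trans hs.1))
      (fun s hs => hv' s N (ht₀.trans hs.1) fun r hr => hbound r ⟨hr.1, hr.2.trans hs.2⟩)
      ⟨le_rfl, hτ.1⟩ ⟨hτ.1, le_rfl⟩ hτ.1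
  set E := exp (α * (τ - t₀))
  have hgrowth : K * N ≤ E * ((K - 1) * N) := by
    have hvt₀ := hpos t₀ ⟨ht₀, le_rfl⟩
    rw [show α * τ = α * t₀ + α * (τ - t₀) by ring, exp_add, show v τ = -N by simp [N]] at hmono
    nlinarith [exp_pos (α * t₀)]
  have hE1 : 1 ≤ E := one_le_exp (mul_nonneg hα.le (sub_nonneg.2 hτ.1))
  have hEh : K * (E - 1) ≤ K * (exp (α * h) - 1) :=
    mul_le_mul_of_nonneg_left (sub_le_sub_right (exp_le_exp.2
      (mul_le_mul_of_nonneg_left (by linarith [hσ.2, hτ.2]) hα.le)) 1) hK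
  nlinarith

theorem nonneg_of_deriv_ge (hα : 0 < α) (hK : 0 ≤ K)
    (hv : ∀ t, 0 ≤ t → HasDerivAt v (v' t) t) (hv0 : v 0 = 0)
    (hv' : ∀ t N, 0 ≤ t → (∀ s ∈ Icc 0 t, -N ≤ v s) → -(α * (v t + K * N)) ≤ v' t) :
    ∀ t, 0 ≤ t → 0 ≤ v t := by
  set h := log (1 + 1 / (K + 1)) / α
  have hh : K * (exp (α * h) - 1) < 1 := by
    rw [mul_div_cancel₀ _ hα.ne', exp_log (by positivity), add_sub_cancel_left,
      ← div_eq_mul_one_div, div_lt_one (by linarith)]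
    linarith
  have hh0 : 0 < h := div_pos (log_pos (by simp; positivity)) hα
  have hstep : ∀ n : ℕ, ∀ s ∈ Icc 0 (n * h), 0 ≤ v s := by
    intro n
    induction n with
    | zero =>
      intro s hs
      simp only [CharP.cast_eq_zero, zero_mul, Icc_self, mem_singleton_iff] at hs
      rw [hs, hv0]
    | succ n ih =>
      intro s hs
      exact nonneg_Icc_add_of_deriv_ge hα hK hv hv' hh (by positivity) ih s
        ⟨hs.1, by push_cast at hs; linarith [hs.2]⟩
  intro t ht
  obtain ⟨n, hn⟩ := exists_nat_ge (t / h)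
  exact hstep n t ⟨ht, (div_le_iff₀ hh0).1 hn⟩

end Continuation

theorem pos_of_hasDerivAt_eq_mul {f g : ℝ → ℝ} (hg : Continuous g)
    (hf : ∀ t, 0 ≤ t → HasDerivAt f (g t * f t) t) (hf0 : 0 < f 0) :
    ∀ t, 0 ≤ t → 0 < f t := by
  intro t ht
  set G : ℝ → ℝ := fun x => ∫ s in (0 : ℝ)..x, g s
  have hG : ∀ x, HasDerivAt G (g x) x := fun x => (hg.integral_hasStrictDerivAt 0 x).hasDerivAt
  have hφ : ∀ x, 0 ≤ x → HasDerivAt (fun x => f x * exp (-G x)) 0 x := fun x hx =>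
    ((hf x hx).mul (hG x).neg.exp).congr_deriv (by ring)
  have hconst := constant_of_has_deriv_right_zero
    (fun x hx => (hφ x hx.1).continuousAt.continuousWithinAt)
    (fun x hx => (hφ x hx.1).hasDerivWithinAt) t ⟨ht, le_rfl⟩
  simp only [G, intervalIntegral.integral_same, neg_zero, exp_zero, mul_one] at hconst
  exact pos_of_mul_pos_left (hconst ▸ hf0) (exp_pos _).le

namespace IsSIR

variable {α m : ℝ} {β S I R : ℝ → ℝ} {t : ℝ}

theorem hasDerivAt_susceptible (h : IsSIR α m β S I R) (ht : 0 ≤ t) :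
    HasDerivAt S (-(β t * S t * I t / m)) t :=
  (h.2.2.2 t ht).2.1 ▸ (h.1 t).hasDerivAt

theorem hasDerivAt_infected (h : IsSIR α m β S I R) (ht : 0 ≤ t) :
    HasDerivAt I (β t * S t * I t / m - α * I t) t :=
  (h.2.2.2 t ht).1 ▸ (h.2.1 t).hasDerivAt

theorem hasDerivAt_recovered (h : IsSIR α m β S I R) (ht : 0 ≤ t) :
    HasDerivAt R (α * I t) t :=
  (h.2.2.2 t ht).2.2 ▸ (h.2.2.1 t).hasDerivAt

theorem add_add_eq (h : IsSIR α m β S I R) (ht : 0 ≤ t) :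
    S t + I t + R t = S 0 + I 0 + R 0 := by
  have hN : ∀ x, 0 ≤ x → HasDerivAt (fun s => S s + I s + R s) 0 x := fun x hx =>
    (((h.hasDerivAt_susceptible hx).add (h.hasDerivAt_infected hx)).add
      (h.hasDerivAt_recovered hx)).congr_deriv (by ring)
  exact constant_of_has_deriv_right_zero (fun x hx => (hN x hx.1).continuousAt.continuousWithinAt)
    (fun x hx => (hN x hx.1).hasDerivWithinAt) t ⟨ht, le_rfl⟩

theorem susceptible_pos (h : IsSIR α m β S I R) (hβ : Continuous β) (hS0 : 0 < S 0) :
    ∀ t, 0 ≤ t → 0 < S t :=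
  pos_of_hasDerivAt_eq_mul (g := fun s => -(β s * I s / m))
    ((hβ.mul h.2.1.continuous).div_const m).neg
    (fun _ ht => (h.hasDerivAt_susceptible ht).congr_deriv (by ring)) hS0

theorem infected_pos (h : IsSIR α m β S I R) (hβ : Continuous β) (hI0 : 0 < I 0) :
    ∀ t, 0 ≤ t → 0 < I t :=
  pos_of_hasDerivAt_eq_mul (g := fun s => β s * S s / m - α)
    (((hβ.mul h.1.continuous).div_const m).sub continuous_const)
    (fun _ ht => (h.hasDerivAt_infected ht).congr_deriv (by ring)) hI0

theorem susceptible_le_initial (h : IsSIR α m β S I R) (hm : 0 ≤ m)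
    (hβ : ∀ t, 0 ≤ t → 0 ≤ β t) (hS : ∀ t, 0 ≤ t → 0 ≤ S t) (hI : ∀ t, 0 ≤ t → 0 ≤ I t)
    (ht : 0 ≤ t) : S t ≤ S 0 := by
  refine antitoneOn_of_hasDerivWithinAt_nonpos (convex_Ici 0)
    (fun x hx => (h.1 x).continuousAt.continuousWithinAt)
    (fun x hx => (h.hasDerivAt_susceptible (interior_subset hx)).hasDerivWithinAt)
    (fun x hx => ?_) self_mem_Ici ht ht
  have hx : 0 ≤ x := interior_subset hx
  exact neg_nonpos.2 (div_nonneg (mul_nonneg (mul_nonneg (hβ x hx) (hS x hx)) (hI x hx)) hm)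

theorem hasDerivAt_log_susceptible (h : IsSIR α m β S I R) (hm : m ≠ 0) (ht : 0 ≤ t)
    (hS : 0 < S t) : HasDerivAt (fun s => log (S s)) (-(β t * I t / m)) t :=
  ((h.hasDerivAt_susceptible ht).log hS.ne').congr_deriv (by field_simp)

end IsSIR

theorem neg_mul_le_sub_of_neg_le_log_sub_log {x y Y δ : ℝ} (hx : 0 < x) (hy : 0 < y)
    (hyY : y ≤ Y) (hδ : 0 ≤ δ) (hlog : -δ ≤ log x - log y) : -(Y * δ) ≤ x - y := by
  have hlog_le : log x - log y ≤ x / y - 1 := by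
    rw [← log_div hx.ne' hy.ne']; exact log_le_sub_one_of_pos (div_pos hx hy)
  calc -(Y * δ) ≤ y * -δ := by nlinarith
    _ ≤ y * (log x - log y) := mul_le_mul_of_nonneg_left hlog hy.le
    _ ≤ y * (x / y - 1) := mul_le_mul_of_nonneg_left hlog_le hy.le
    _ = x - y := by field_simp

section Comparison

variable {α m : ℝ} {β₁ β₂ S₁ I₁ R₁ S₂ I₂ R₂ : ℝ → ℝ}

theorem log_susceptible_sub_ge (hα : 0 < α) (hm : 0 < m)
    (h₁ : IsSIR α m β₁ S₁ I₁ R₁) (h₂ : IsSIR α m β₂ S₂ I₂ R₂)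
    (hβ₁c : Continuous β₁) (hβ₁ : ∀ t, 0 ≤ t → 0 ≤ β₁ t)
    (hle : ∀ t, 0 ≤ t → β₁ t ≤ β₂ t) (hmono : AntitoneOn β₁ (Ici 0))
    (hS₁ : ∀ t, 0 ≤ t → 0 < S₁ t) (hS₂ : ∀ t, 0 ≤ t → 0 < S₂ t)
    (hI₂ : ∀ t, 0 ≤ t → 0 ≤ I₂ t) (hS0 : S₁ 0 = S₂ 0) (hR0 : R₁ 0 = R₂ 0)
    {t N : ℝ} (ht : 0 ≤ t) (hN : ∀ s ∈ Icc 0 t, -N ≤ R₂ s - R₁ s) :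
    -(β₁ 0 * N / (α * m)) ≤ log (S₁ t) - log (S₂ t) := by
  have key := sub_mul_le_sub_mul_of_le_mul_deriv (g := β₁) ht
    (u := fun s => α * m * (log (S₁ s) - log (S₂ s)))
    (u' := fun s => α * m * (-(β₁ s * I₁ s / m) - -(β₂ s * I₂ s / m)))
    (v := fun s => R₂ s - R₁ s + N) (v' := fun s => α * I₂ s - α * I₁ s)
    (fun x hx => ((h₁.hasDerivAt_log_susceptible hm.ne' hx.1 (hS₁ x hx.1)).sub
      (h₂.hasDerivAt_log_susceptible hm.ne' hx.1 (hS₂ x hx.1))).const_mul (α * m))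
    (fun x hx => ((h₂.hasDerivAt_recovered hx.1).sub (h₁.hasDerivAt_recovered hx.1)).add_const N)
    hβ₁c.continuousOn (hmono.mono Icc_subset_Ici_self) (fun x hx => by linarith [hN x hx])
    fun x hx => by
      have hαβ := mul_le_mul_of_nonneg_left
        (mul_le_mul_of_nonneg_right (hle x hx.1) (hI₂ x hx.1)) hα.le
      have : α * m * (-(β₁ x * I₁ x / m) - -(β₂ x * I₂ x / m)) =
          α * (β₂ x * I₂ x - β₁ x * I₁ x) := by field_simp; ring
      rw [this]; linarith
  simp only [hS0, hR0, sub_self, mul_zero, zero_add] at key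
  have hvN : 0 ≤ β₁ t * (R₂ t - R₁ t + N) :=
    mul_nonneg (hβ₁ t ht) (by linarith [hN t ⟨ht, le_rfl⟩])
  rw [← neg_div, div_le_iff₀ (mul_pos hα hm)]
  linarith

theorem susceptible_sub_ge (hα : 0 < α) (hm : 0 < m)
    (h₁ : IsSIR α m β₁ S₁ I₁ R₁) (h₂ : IsSIR α m β₂ S₂ I₂ R₂)
    (hβ₁c : Continuous β₁) (hβ₁ : ∀ t, 0 ≤ t → 0 ≤ β₁ t)
    (hle : ∀ t, 0 ≤ t → β₁ t ≤ β₂ t) (hmono : AntitoneOn β₁ (Ici 0))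
    (hS₁ : ∀ t, 0 ≤ t → 0 < S₁ t) (hS₂ : ∀ t, 0 ≤ t → 0 < S₂ t)
    (hI₂ : ∀ t, 0 ≤ t → 0 ≤ I₂ t) (hS0 : S₁ 0 = S₂ 0) (hR0 : R₁ 0 = R₂ 0)
    {t N : ℝ} (ht : 0 ≤ t) (hN : ∀ s ∈ Icc 0 t, -N ≤ R₂ s - R₁ s) :
    -(S₂ 0 * β₁ 0 / (α * m) * N) ≤ S₁ t - S₂ t := by
  have hN0 : 0 ≤ N := by
    have := hN 0 ⟨le_rfl, ht⟩
    rwa [hR0, sub_self, neg_le, neg_zero] at this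
  have := neg_mul_le_sub_of_neg_le_log_sub_log (hS₁ t ht) (hS₂ t ht)
    (h₂.susceptible_le_initial hm.le (fun s hs => (hβ₁ s hs).trans (hle s hs))
      (fun s hs => (hS₂ s hs).le) hI₂ ht)
    (div_nonneg (mul_nonneg (hβ₁ 0 le_rfl) hN0) (mul_pos hα hm).le)
    (log_susceptible_sub_ge hα hm h₁ h₂ hβ₁c hβ₁ hle hmono hS₁ hS₂ hI₂ hS0 hR0 ht hN)
  convert this using 2
  ring

end Comparison

theorem stmt_1_general (α m c : ℝ) (hα : 0 < α) (hm : 0 < m) (hc : 0 < c)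
    (β₁ β₂ : ℝ → ℝ) (hβ₁c : Continuous β₁) (hβ₂c : Continuous β₂)
    (hlb : ∀ t : ℝ, 0 ≤ t → c ≤ β₁ t)
    (hle : ∀ t : ℝ, 0 ≤ t → β₁ t ≤ β₂ t)
    (hmono : AntitoneOn β₁ (Set.Ici (0 : ℝ)))
    (S₁ I₁ R₁ S₂ I₂ R₂ : ℝ → ℝ)
    (h₁ : IsSIR α m β₁ S₁ I₁ R₁) (h₂ : IsSIR α m β₂ S₂ I₂ R₂)
    (S₀ I₀ R₀ : ℝ) (hS₀ : 0 < S₀) (hI₀ : 0 < I₀)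
    (hS₁0 : S₁ 0 = S₀) (hS₂0 : S₂ 0 = S₀)
    (hI₁0 : I₁ 0 = I₀) (hI₂0 : I₂ 0 = I₀)
    (hR₁0 : R₁ 0 = R₀) (hR₂0 : R₂ 0 = R₀) :
    ∀ t : ℝ, 0 ≤ t → S₂ t ≤ S₁ t := by
  have hβ₁ : ∀ t, 0 ≤ t → 0 ≤ β₁ t := fun t ht => hc.le.trans (hlb t ht)
  have hS₁ := h₁.susceptible_pos hβ₁c (hS₁0 ▸ hS₀)
  have hS₂ := h₂.susceptible_pos hβ₂c (hS₂0 ▸ hS₀)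
  have hI₂ : ∀ t, 0 ≤ t → 0 ≤ I₂ t := fun t ht => (h₂.infected_pos hβ₂c (hI₂0 ▸ hI₀) t ht).le
  have hS0 : S₁ 0 = S₂ 0 := hS₁0.trans hS₂0.symm
  have hR0 : R₁ 0 = R₂ 0 := hR₁0.trans hR₂0.symm
  set K := S₂ 0 * β₁ 0 / (α * m)
  have hv := nonneg_of_deriv_ge hα (v := fun s => R₂ s - R₁ s) (K := K)
    (div_nonneg (mul_nonneg (hS₂ 0 le_rfl).le (hβ₁ 0 le_rfl)) (mul_pos hα hm).le)
    (fun t ht => (h₂.hasDerivAt_recovered ht).sub (h₁.hasDerivAt_recovered ht))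
    (by rw [hR0, sub_self]) fun t N ht hN => by
      -- `S + I + R` is conserved, so `I₂ - I₁ = (S₁ - S₂) - (R₂ - R₁)`
      have := mul_le_mul_of_nonneg_left (show -(R₂ t - R₁ t + K * N) ≤ I₂ t - I₁ t by
        linarith [susceptible_sub_ge hα hm h₁ h₂ hβ₁c hβ₁ hle hmono hS₁ hS₂ hI₂ hS0 hR0 ht hN,
          h₁.add_add_eq ht, h₂.add_add_eq ht]) hα.le
      linarith
  intro t ht
  have := log_susceptible_sub_ge hα hm h₁ h₂ hβ₁c hβ₁ hle hmono hS₁ hS₂ hI₂ hS0 hR0 ht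
    (N := 0) fun s hs => by simpa using hv s hs.1
  rw [mul_zero, zero_div, neg_zero, sub_nonneg] at this
  exact (log_le_log_iff (hS₂ t ht) (hS₁ t ht)).1 this

theorem stmt_1 (α m c : ℝ) (hα : 0 < α) (hm : 0 < m) (hc : 0 < c)
    (β₁ β₂ : ℝ → ℝ) (hβ₁c : Continuous β₁) (hβ₂c : Continuous β₂)
    (hlb : ∀ t : ℝ, 0 ≤ t → c ≤ β₁ t)
    (hle : ∀ t : ℝ, 0 ≤ t → β₁ t ≤ β₂ t)
    (hmono : AntitoneOn β₁ (Set.Ici (0 : ℝ)))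
    (S₁ I₁ R₁ S₂ I₂ R₂ : ℝ → ℝ)
    (h₁ : IsSIR α m β₁ S₁ I₁ R₁) (h₂ : IsSIR α m β₂ S₂ I₂ R₂)
    (S₀ I₀ R₀ : ℝ) (hS₀ : 0 < S₀) (hI₀ : 0 < I₀) (hR₀ : 0 ≤ R₀)
    (hsum : S₀ + I₀ + R₀ = m)
    (hS₁0 : S₁ 0 = S₀) (hS₂0 : S₂ 0 = S₀)
    (hI₁0 : I₁ 0 = I₀) (hI₂0 : I₂ 0 = I₀)
    (hR₁0 : R₁ 0 = R₀) (hR₂0 : R₂ 0 = R₀) :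
    ∀ t : ℝ, 0 ≤ t → S₂ t ≤ S₁ t :=
  stmt_1_general α m c hα hm hc β₁ β₂ hβ₁c hβ₂c hlb hle hmono S₁ I₁ R₁ S₂ I₂ R₂ h₁ h₂ S₀ I₀ R₀ hS₀
    hI₀ hS₁0 hS₂0 hI₁0 hI₂0 hR₁0 hR₂0
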